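/- If X(t) solves the landing system Ẋ = −ψ(X)X − λX(XᵀX − I_p), then χ(t) = X(t)ᵀX(t) satisfies the matrix ODE χ̇(t) = −2λ·χ(t)(χ(t) − I_p). -/

import Mathlib

/-! With `χ = XᵀX`, `χ̇ = ẊᵀX + XᵀẊ`. The rotational term `-ψX` contributes `-Xᵀ(ψᵀ + ψ)X = 0`
because `ψ` is skew-symmetric, and the normal term `-λX(χ - 1)` contributes
`-λ((χ - 1)χ + χ(χ - 1)) = -2λχ(χ - 1)` because `χ` is symmetric and commutes with `χ - 1`. -/

open Matrix

attribute [local instance] Matrix.frobeniusNormedAddCommGroup Matrix.frobeniusNormedSpace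

section Calculus

variable {𝕜 : Type*} [NontriviallyNormedField 𝕜] [CompleteSpace 𝕜]
  {l m n : Type*} [Fintype l] [Fintype m] [Fintype n] {t : 𝕜}

theorem HasDerivAt.matrix_mul {A : 𝕜 → Matrix l m 𝕜} {B : 𝕜 → Matrix m n 𝕜}
    {A' : Matrix l m 𝕜} {B' : Matrix m n 𝕜} (hA : HasDerivAt A A' t) (hB : HasDerivAt B B' t) :
    HasDerivAt (fun s => A s * B s) (A' * B t + A t * B') t := by
  rw [add_comm]
  exact (mulLinearMap 𝕜).toContinuousBilinearMap.hasDerivAt_of_bilinear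
    (fun _ => hA) (fun _ => hB)

theorem HasDerivAt.matrix_transpose {A : 𝕜 → Matrix m n 𝕜} {A' : Matrix m n 𝕜}
    (hA : HasDerivAt A A' t) : HasDerivAt (fun s => (A s)ᵀ) A'ᵀ t :=
  (transposeLinearEquiv m n 𝕜 𝕜).toLinearMap.toContinuousLinearMap.hasFDerivAt.comp_hasDerivAt t hA

end Calculus

namespace Matrix

variable {R : Type*} [CommRing R] {m n : Type*}

theorem transpose_mul_transpose_sub [Fintype n] (A B : Matrix m n R) :
    (A * Bᵀ - B * Aᵀ)ᵀ = -(A * Bᵀ - B * Aᵀ) := by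
  rw [transpose_sub, transpose_mul, transpose_mul, transpose_transpose, transpose_transpose,
    neg_sub]

theorem skew_mul_transpose_mul_add_eq_zero [Fintype m] {S : Matrix m m R}
    (hS : Sᵀ = -S) (X : Matrix m n R) : (S * X)ᵀ * X + Xᵀ * (S * X) = 0 := by
  rw [transpose_mul, hS, Matrix.mul_assoc, Matrix.neg_mul, Matrix.mul_neg, neg_add_cancel]

variable [Fintype m] [Fintype n] [DecidableEq n]

theorem mul_gram_sub_one_transpose_mul_add (X : Matrix m n R) :
    (X * (Xᵀ * X - 1))ᵀ * X + Xᵀ * (X * (Xᵀ * X - 1)) = (2 : R) • (Xᵀ * X * (Xᵀ * X - 1)) := by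
  rw [transpose_mul, transpose_sub, transpose_mul, transpose_transpose, transpose_one,
    Matrix.mul_assoc, ← Matrix.mul_assoc Xᵀ, two_smul]
  congr 1
  rw [Matrix.sub_mul, Matrix.mul_sub, Matrix.one_mul, Matrix.mul_one]

theorem landing_gram_deriv {S : Matrix m m R} (hS : Sᵀ = -S) (c : R) (X : Matrix m n R) :
    (-(S * X) - c • (X * (Xᵀ * X - 1)))ᵀ * X + Xᵀ * (-(S * X) - c • (X * (Xᵀ * X - 1))) =
      -(2 * c) • (Xᵀ * X * (Xᵀ * X - 1)) := by
  have hskew := skew_mul_transpose_mul_add_eq_zero hS X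
  have hnormal := mul_gram_sub_one_transpose_mul_add X
  -- opaque, so that the rewrites below distribute only the outer products
  set N := X * (Xᵀ * X - 1)
  rw [transpose_sub, transpose_neg, transpose_smul, Matrix.sub_mul, Matrix.neg_mul,
    Matrix.smul_mul, Matrix.mul_sub, Matrix.mul_neg, Matrix.mul_smul]
  linear_combination (norm := module) -hskew - c • hnormal

end Matrix

theorem gram_matrix_ode_general (n p : ℕ) (lam : ℝ)
    (G : Matrix (Fin n) (Fin p) ℝ → Matrix (Fin n) (Fin p) ℝ)
    (X : ℝ → Matrix (Fin n) (Fin p) ℝ)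
    (hX : ∀ t : ℝ,
      HasDerivAt X
        (-((G (X t) * (X t)ᵀ - X t * (G (X t))ᵀ) * X t)
          - lam • (X t * ((X t)ᵀ * X t - 1))) t) :
    ∀ t : ℝ,
      HasDerivAt (fun s => (X s)ᵀ * X s)
        (-(2 * lam) • ((X t)ᵀ * X t * ((X t)ᵀ * X t - 1))) t := by
  intro t
  rw [← landing_gram_deriv (transpose_mul_transpose_sub (G (X t)) (X t))]
  exact (hX t).matrix_transpose.matrix_mul (hX t)

/-- If `X(t)` solves the landing system `Ẋ = −ψ(X)X − λX(XᵀX − I)`, then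
`χ(t) = X(t)ᵀX(t)` satisfies `χ̇(t) = −2λ χ(t)(χ(t) − I)`. -/
theorem gram_matrix_ode (n p : ℕ) (lam : ℝ) (hlam : 0 < lam)
    (f : Matrix (Fin n) (Fin p) ℝ → ℝ) (hf : Differentiable ℝ f)
    (G : Matrix (Fin n) (Fin p) ℝ → Matrix (Fin n) (Fin p) ℝ)
    (hG : ∀ Y ξ : Matrix (Fin n) (Fin p) ℝ, fderiv ℝ f Y ξ = ((G Y)ᵀ * ξ).trace)
    (X : ℝ → Matrix (Fin n) (Fin p) ℝ)
    (hX : ∀ t : ℝ,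
      HasDerivAt X
        (-((G (X t) * (X t)ᵀ - X t * (G (X t))ᵀ) * X t)
          - lam • (X t * ((X t)ᵀ * X t - 1))) t) :
    ∀ t : ℝ,
      HasDerivAt (fun s => (X s)ᵀ * X s)
        (-(2 * lam) • ((X t)ᵀ * X t * ((X t)ᵀ * X t - 1))) t :=
  gram_matrix_ode_general n p lam G X hX
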